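/- arXiv:2509.15749 — 2 statements merged into one kernel-verified Lean document; each statement's English description precedes it below -/
import Mathlib

section
/- Let k ∈ ℝ^n and f, g ∈ ℝ^d be nonincreasingly ordered vectors such that k_1 ≥ max(f_1, g_1) and k_n ≤ min(f_d, g_d), and let k^{⊕d} ∈ ℝ^{nd} denote the nonincreasing rearrangement of the concatenation of d copies of k. Then ‖(k^{⊕d} ⊕ f)↓ − (k^{⊕d} ⊕ g)↓‖_∞ ≤ max_{1 ≤ i ≤ n−1} (k_i − k_{i+1}). -/
/-- The nonincreasing rearrangement of a finite real vector. -/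
noncomputable def sortDesc {n : ℕ} (v : Fin n → ℝ) : Fin n → ℝ :=
  fun i => v (Tuple.sort (fun j => -v j) i)

/-- `max_{1 ≤ i ≤ n-1} (k_i - k_{i+1})`. -/
noncomputable def gapMax (n : ℕ) (hn : 2 ≤ n) (k : Fin n → ℝ) : ℝ :=
  Finset.sup' Finset.univ ⟨⟨0, by omega⟩, Finset.mem_univ _⟩
    fun i : Fin (n - 1) =>
      k (Fin.castLE (by omega) i) - k ⟨(i : ℕ) + 1, by have := i.isLt; omega⟩

/-- The concatenation of `d` copies of a vector `k ∈ ℝ^n`. -/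
noncomputable def repeatVec (n d : ℕ) (k : Fin n → ℝ) : Fin (n * d) → ℝ :=
  fun i => k ((finProdFinEquiv.symm i).1)

section Cnt

/-- number of entries of `v` satisfying `p`. -/
noncomputable def cnt {N : ℕ} (p : ℝ → Prop) [DecidablePred p] (v : Fin N → ℝ) : ℕ :=
  (Finset.univ.filter fun j => p (v j)).card

lemma cnt_le {N : ℕ} (p : ℝ → Prop) [DecidablePred p] (v : Fin N → ℝ) : cnt p v ≤ N := by
  classical
  simpa [cnt] using (Finset.card_filter_le Finset.univ fun j => p (v j)).trans (by simp)

lemma cnt_comp_perm {N : ℕ} (p : ℝ → Prop) [DecidablePred p] (v : Fin N → ℝ) (σ : Equiv.Perm (Fin N)) :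
    cnt p (v ∘ σ) = cnt p v := by
  classical
  simp only [cnt, Finset.card_filter, Function.comp]
  exact Equiv.sum_comp σ (fun j => if p (v j) then 1 else 0)

lemma cnt_sortDesc {N : ℕ} (p : ℝ → Prop) [DecidablePred p] (v : Fin N → ℝ) :
    cnt p (sortDesc v) = cnt p v :=
  cnt_comp_perm p v (Tuple.sort fun j => -v j)

lemma antitone_sortDesc {N : ℕ} (v : Fin N → ℝ) : Antitone (sortDesc v) := by
  intro i j hij
  have := Tuple.monotone_sort (fun j => -v j) hij
  simp only [Function.comp] at this
  simpa [sortDesc] using neg_le_neg_iff.mp (by simpa using this)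

lemma cnt_append {M N : ℕ} (p : ℝ → Prop) [DecidablePred p] (u : Fin M → ℝ) (v : Fin N → ℝ) :
    cnt p (Fin.append u v) = cnt p u + cnt p v := by
  classical
  simp only [cnt, Finset.card_filter]
  rw [Fin.sum_univ_add]
  simp [Fin.append_left, Fin.append_right]

lemma lt_cnt {N : ℕ} {p : ℝ → Prop} [DecidablePred p] (hp : ∀ ⦃x y : ℝ⦄, x ≤ y → p x → p y)
    {a : Fin N → ℝ} (ha : Antitone a) (i : Fin N) (h : p (a i)) :
    (i : ℕ) < cnt p a := by
  classical
  have hsub : Finset.Iic i ⊆ Finset.univ.filter fun j => p (a j) := by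
    intro j hj
    simp only [Finset.mem_Iic] at hj
    exact Finset.mem_filter.mpr ⟨Finset.mem_univ _, hp (ha hj) h⟩
  have := Finset.card_le_card hsub
  rw [Fin.card_Iic] at this
  unfold cnt
  omega

lemma of_lt_cnt {N : ℕ} {p : ℝ → Prop} [DecidablePred p] (hp : ∀ ⦃x y : ℝ⦄, x ≤ y → p x → p y)
    {a : Fin N → ℝ} (ha : Antitone a) (i : Fin N) (h : (i : ℕ) < cnt p a) :
    p (a i) := by
  classical
  by_contra hne
  have hsub : (Finset.univ.filter fun j => p (a j)) ⊆ Finset.Iio i := by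
    intro j hj
    simp only [Finset.mem_filter] at hj
    simp only [Finset.mem_Iio]
    by_contra hji
    exact hne (hp (ha (le_of_not_gt hji)) hj.2)
  have := Finset.card_le_card hsub
  rw [Fin.card_Iio] at this
  unfold cnt at h
  omega

lemma cnt_eq_card {N : ℕ} {p : ℝ → Prop} [DecidablePred p] {v : Fin N → ℝ} (h : ∀ j, p (v j)) :
    cnt p v = N := by
  classical
  simp [cnt, Finset.filter_true_of_mem fun j _ => h j]

lemma cnt_eq_zero {N : ℕ} {p : ℝ → Prop} [DecidablePred p] {v : Fin N → ℝ} (h : ∀ j, ¬ p (v j)) :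
    cnt p v = 0 := by
  classical
  simp [cnt, Finset.filter_false_of_mem fun j _ => h j]

end Cnt

lemma sortDesc_eq_self {N : ℕ} {v : Fin N → ℝ} (hv : Antitone v) : sortDesc v = v := by
  have hm : Monotone (fun j => -v j) := fun i j hij => neg_le_neg (hv hij)
  funext i
  rw [sortDesc, Tuple.sort_eq_refl_iff_monotone.mpr hm]
  rfl

lemma repeatVec_apply (n d : ℕ) (hd : 0 < d) (k : Fin n → ℝ) (i : Fin (n * d)) :
    repeatVec n d k i = k ⟨(i : ℕ) / d, (Nat.div_lt_iff_lt_mul hd).mpr i.isLt⟩ := rfl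

lemma antitone_repeatVec (n d : ℕ) (k : Fin n → ℝ) (hk : Antitone k) :
    Antitone (repeatVec n d k) := by
  intro i j hij
  rcases Nat.eq_zero_or_pos d with rfl | hd
  · exact absurd i.isLt (by simp)
  rw [repeatVec_apply n d hd, repeatVec_apply n d hd]
  exact hk (by simp only [Fin.mk_le_mk]; exact Nat.div_le_div_right hij)

lemma sub_div_pred (i d : ℕ) (hd : 0 < d) : (i - d) / d = i / d - 1 := by
  rcases le_or_gt d i with h | h
  · obtain ⟨j, rfl⟩ : ∃ j, i = j + d := ⟨i - d, by omega⟩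
    simp [Nat.add_div_right _ hd]
  · simp [Nat.sub_eq_zero_of_le h.le, Nat.div_eq_of_lt h]

lemma gap_le (n : ℕ) (hn : 2 ≤ n) (k : Fin n → ℝ) (j : ℕ) (hj : j < n - 1) :
    k ⟨j, by omega⟩ - k ⟨j + 1, by omega⟩ ≤ gapMax n hn k := by
  have := Finset.le_sup'
    (fun i : Fin (n - 1) =>
      k (Fin.castLE (by omega) i) - k ⟨(i : ℕ) + 1, by have := i.isLt; omega⟩)
    (Finset.mem_univ (⟨j, hj⟩ : Fin (n - 1)))
  simpa [gapMax, Fin.castLE] using this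

lemma gapMax_nonneg (n : ℕ) (hn : 2 ≤ n) (k : Fin n → ℝ) (hk : Antitone k) :
    0 ≤ gapMax n hn k := by
  refine le_trans ?_ (gap_le n hn k 0 (by omega))
  have : k ⟨1, by omega⟩ ≤ k ⟨0, by omega⟩ := hk (by simp [Fin.mk_le_mk])
  linarith

lemma sandwich_aux1 (n : ℕ) (hn : 2 ≤ n) : 0 < n := by omega

lemma sandwich_aux2 (n : ℕ) (hn : 2 ≤ n) : n - 1 < n := by omega

lemma sandwich_aux3 (d : ℕ) (hd : 0 < d) : d - 1 < d := by omega

lemma sandwich (n d : ℕ) (hn : 2 ≤ n) (hd : 0 < d)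
    (k : Fin n → ℝ) (f : Fin d → ℝ)
    (hk : Antitone k) (hf : Antitone f)
    (hf1 : f ⟨0, hd⟩ ≤ k ⟨0, sandwich_aux1 n hn⟩)
    (hfd : k ⟨n - 1, sandwich_aux2 n hn⟩ ≤ f ⟨d - 1, sandwich_aux3 d hd⟩)
    (i : Fin (n * d + d)) :
    k ⟨min ((i : ℕ) / d) (n - 1), by omega⟩ ≤
      sortDesc (Fin.append (sortDesc (repeatVec n d k)) f) i ∧
    sortDesc (Fin.append (sortDesc (repeatVec n d k)) f) i ≤
      k ⟨min (((i : ℕ) - d) / d) (n - 1), by omega⟩ := by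
  have hKanti : Antitone (repeatVec n d k) := antitone_repeatVec n d k hk
  have hKs : sortDesc (repeatVec n d k) = repeatVec n d k := sortDesc_eq_self hKanti
  set K : Fin (n * d) → ℝ := repeatVec n d k with hKdef
  have hKi : ∀ j : Fin (n * d), K j = k ⟨(j : ℕ) / d, (Nat.div_lt_iff_lt_mul hd).mpr j.isLt⟩ :=
    fun j => rfl
  set A : Fin (n * d + d) → ℝ := sortDesc (Fin.append (sortDesc (repeatVec n d k)) f) with hAdef
  have hAanti : Antitone A := antitone_sortDesc _
  have hcntA : ∀ (p : ℝ → Prop) [DecidablePred p], cnt p A = cnt p K + cnt p f := by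
    intro p inst
    rw [hAdef, cnt_sortDesc, hKs, cnt_append]
  have hdivle : ∀ j : ℕ, j < n * d → j / d ≤ n - 1 := by
    intro j hj
    have : j / d < n := (Nat.div_lt_iff_lt_mul hd).mpr hj
    omega
  constructor
  · -- lower bound
    set m := min ((i : ℕ) / d) (n - 1) with hm
    set t := k ⟨m, by omega⟩ with ht
    have hp : ∀ ⦃x y : ℝ⦄, x ≤ y → t ≤ x → t ≤ y := fun x y hxy hx => hx.trans hxy
    refine of_lt_cnt hp hAanti i ?_
    rw [hcntA]
    rcases lt_or_ge ((i : ℕ)) (n * d) with h1 | h1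
    · have hle : (i : ℕ) / d ≤ n - 1 := hdivle i h1
      have hpK : t ≤ K ⟨(i : ℕ), h1⟩ := by
        rw [hKi]
        exact hk (by simp only [Fin.mk_le_mk]; omega)
      have h2 : (i : ℕ) < cnt (LE.le t) K := lt_cnt hp hKanti ⟨(i : ℕ), h1⟩ hpK
      omega
    · -- i ≥ N : everything is ≥ k (n-1) = t
      have hge : n ≤ (i : ℕ) / d := (Nat.le_div_iff_mul_le hd).mpr h1
      have hmeq : m = n - 1 := by omega
      have hK' : cnt (LE.le t) K = n * d := by
        refine cnt_eq_card fun j => ?_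
        rw [hKi]
        have hj1 : k ⟨n - 1, by omega⟩ ≤ k ⟨(j : ℕ) / d, (Nat.div_lt_iff_lt_mul hd).mpr j.isLt⟩ :=
          hk (by simp only [Fin.le_def]; have := hdivle j j.isLt; omega)
        have hj2 : t = k ⟨n - 1, by omega⟩ := by
          rw [ht]; exact congrArg k (Fin.ext (by simpa using hmeq))
        rw [hj2]; exact hj1
      have hf' : cnt (LE.le t) f = d := by
        refine cnt_eq_card fun j => ?_
        have hj1 : f ⟨d - 1, by omega⟩ ≤ f j :=
          hf (by simp only [Fin.le_def]; have := j.isLt; omega)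
        have hj2 : t ≤ f ⟨d - 1, by omega⟩ := by
          rw [ht]
          calc k ⟨m, by omega⟩ = k ⟨n - 1, by omega⟩ := congrArg k (Fin.ext (by simpa using hmeq))
          _ ≤ f ⟨d - 1, by omega⟩ := hfd
        exact hj2.trans hj1
      rw [hK', hf']
      have := i.isLt
      omega
  · -- upper bound
    set m' := min (((i : ℕ) - d) / d) (n - 1) with hm'
    set s := k ⟨m', by omega⟩ with hs
    have hq : ∀ ⦃x y : ℝ⦄, x ≤ y → s < x → s < y := fun x y hxy hx => hx.trans_le hxy
    by_contra hcon
    push_neg at hcon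
    have hlt := lt_cnt hq hAanti i hcon
    rw [hcntA] at hlt
    rcases lt_or_ge ((i : ℕ)) d with h1 | h1
    · have hm0 : m' = 0 := by
        have h0 : (i : ℕ) - d = 0 := by omega
        rw [hm', h0, Nat.zero_div]
        omega
      have hs0 : s = k ⟨0, by omega⟩ := congrArg k (Fin.ext hm0)
      have hK0 : cnt (LT.lt s) K = 0 := by
        refine cnt_eq_zero fun j => ?_
        rw [hKi, hs0]
        exact not_lt.mpr (hk (by simp [Fin.mk_le_mk]))
      have hf0 : cnt (LT.lt s) f = 0 := by
        refine cnt_eq_zero fun j => ?_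
        rw [hs0]
        refine not_lt.mpr (le_trans (hf (show (⟨0, hd⟩ : Fin d) ≤ j from by
          simp only [Fin.le_def]; omega)) hf1)
      have hlt' : (i : ℕ) < cnt (LT.lt s) K + cnt (LT.lt s) f := hlt
      rw [hK0, hf0] at hlt'
      omega
    · have hid : (i : ℕ) - d < n * d := by have := i.isLt; omega
      have hKle : cnt (LT.lt s) K ≤ (i : ℕ) - d := by
        by_contra hK
        push_neg at hK
        have := of_lt_cnt hq hKanti ⟨(i : ℕ) - d, hid⟩ hK
        rw [hKi] at this
        have hle2 : s ≥ k ⟨((i : ℕ) - d) / d, by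
            exact (Nat.div_lt_iff_lt_mul hd).mpr hid⟩ := by
          rw [hs]
          refine hk ?_
          simp only [Fin.mk_le_mk]
          omega
        exact absurd (lt_of_le_of_lt hle2 this) (lt_irrefl _)
      have hfle : cnt (LT.lt s) f ≤ d := cnt_le _ _
      have hlt' : (i : ℕ) < cnt (LT.lt s) K + cnt (LT.lt s) f := hlt
      omega

lemma gap_bound (n d : ℕ) (hn : 2 ≤ n) (hd : 0 < d) (k : Fin n → ℝ) (hk : Antitone k)
    (i : Fin (n * d + d)) :
    k ⟨min (((i : ℕ) - d) / d) (n - 1), by omega⟩ -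
      k ⟨min ((i : ℕ) / d) (n - 1), by omega⟩ ≤ gapMax n hn k := by
  have hdiv : ((i : ℕ) - d) / d = (i : ℕ) / d - 1 := sub_div_pred _ _ hd
  rcases eq_or_ne (min (((i : ℕ) - d) / d) (n - 1)) (min ((i : ℕ) / d) (n - 1)) with h | h
  · have : k ⟨min (((i : ℕ) - d) / d) (n - 1), by omega⟩ =
        k ⟨min ((i : ℕ) / d) (n - 1), by omega⟩ := congrArg k (Fin.ext h)
    rw [this]
    simpa using gapMax_nonneg n hn k hk
  · have h1 : min ((i : ℕ) / d) (n - 1) = min (((i : ℕ) - d) / d) (n - 1) + 1 ∧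
        min (((i : ℕ) - d) / d) (n - 1) < n - 1 := by
      generalize hq : (i : ℕ) / d = q at hdiv h ⊢
      generalize hr : ((i : ℕ) - d) / d = r at hdiv h ⊢
      omega
    have := gap_le n hn k (min (((i : ℕ) - d) / d) (n - 1)) h1.2
    have he : k ⟨min ((i : ℕ) / d) (n - 1), by omega⟩ =
        k ⟨min (((i : ℕ) - d) / d) (n - 1) + 1, by omega⟩ := congrArg k (Fin.ext h1.1)
    rw [he]
    exact this

theorem list_sort_corollary (n d : ℕ) (hn : 2 ≤ n) (hd : 0 < d)
    (k : Fin n → ℝ) (f g : Fin d → ℝ)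
    (hk : Antitone k) (hf : Antitone f) (hg : Antitone g)
    (hf1 : f ⟨0, hd⟩ ≤ k ⟨0, by omega⟩) (hg1 : g ⟨0, hd⟩ ≤ k ⟨0, by omega⟩)
    (hfd : k ⟨n - 1, by omega⟩ ≤ f ⟨d - 1, by omega⟩)
    (hgd : k ⟨n - 1, by omega⟩ ≤ g ⟨d - 1, by omega⟩) :
    ‖sortDesc (Fin.append (sortDesc (repeatVec n d k)) f) -
        sortDesc (Fin.append (sortDesc (repeatVec n d k)) g)‖ ≤ gapMax n hn k := by
  
  rw [pi_norm_le_iff_of_nonneg (gapMax_nonneg n hn k hk)]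
  intro i
  obtain ⟨hAlo, hAhi⟩ := sandwich n d hn hd k f hk hf hf1 hfd i
  obtain ⟨hBlo, hBhi⟩ := sandwich n d hn hd k g hk hg hg1 hgd i
  have key := gap_bound n d hn hd k hk i
  have h1 : sortDesc (Fin.append (sortDesc (repeatVec n d k)) f) i -
      sortDesc (Fin.append (sortDesc (repeatVec n d k)) g) i ≤
      k ⟨min (((i : ℕ) - d) / d) (n - 1), by omega⟩ -
      k ⟨min ((i : ℕ) / d) (n - 1), by omega⟩ := sub_le_sub hAhi hBlo
  have h2 : sortDesc (Fin.append (sortDesc (repeatVec n d k)) g) i -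
      sortDesc (Fin.append (sortDesc (repeatVec n d k)) f) i ≤
      k ⟨min (((i : ℕ) - d) / d) (n - 1), by omega⟩ -
      k ⟨min ((i : ℕ) / d) (n - 1), by omega⟩ := sub_le_sub hBhi hAlo
  simp only [Pi.sub_apply, Real.norm_eq_abs]
  rw [abs_le]
  constructor <;> linarith
end

section
/- Let ε > 0, let k ∈ [0,1]^n be nonincreasingly ordered such that the set {k_1, …, k_n} is ε-dense in [0,1] (i.e. for every x ∈ [0,1] there is an index i with |k_i − x| < ε), and let f, g ∈ [0,1]^d. Then ‖(k ⊕ f)↓ − (k ⊕ g)↓‖_∞ ≤ 2·d·ε. -/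
/-- count of entries ≥ t -/
noncomputable def Ncnt {m : ℕ} (v : Fin m → ℝ) (t : ℝ) : ℕ :=
  (Finset.univ.filter (fun j => t ≤ v j)).card

lemma sortDesc_antitone {m : ℕ} (v : Fin m → ℝ) : Antitone (sortDesc v) := by
  have h := Tuple.monotone_sort (fun j => -v j)
  intro i j hij
  have := h hij
  simp only [Function.comp] at this
  simpa [sortDesc] using this

lemma Ncnt_sortDesc {m : ℕ} (v : Fin m → ℝ) (t : ℝ) : Ncnt (sortDesc v) t = Ncnt v t := by
  unfold Ncnt sortDesc
  apply Finset.card_bij (fun a _ => Tuple.sort (fun j => -v j) a)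
  · intro a ha; simp_all
  · intro a _ b _ hab; exact (Tuple.sort (fun j => -v j)).injective hab
  · intro b hb
    exact ⟨(Tuple.sort (fun j => -v j)).symm b, by simp_all, by simp⟩

lemma Ncnt_le {m : ℕ} (v : Fin m → ℝ) (t : ℝ) : Ncnt v t ≤ m := by
  unfold Ncnt
  have := Finset.card_filter_le (Finset.univ : Finset (Fin m)) (fun j => t ≤ v j)
  simpa using this

lemma Ncnt_mono {m : ℕ} (v : Fin m → ℝ) {s t : ℝ} (h : s ≤ t) : Ncnt v t ≤ Ncnt v s := by
  unfold Ncnt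
  apply Finset.card_le_card
  intro j hj
  simp only [Finset.mem_filter, Finset.mem_univ, true_and] at *
  linarith

lemma Ncnt_append {n d : ℕ} (k : Fin n → ℝ) (f : Fin d → ℝ) (t : ℝ) :
    Ncnt (Fin.append k f) t = Ncnt k t + Ncnt f t := by
  unfold Ncnt
  simp only [Finset.card_filter]
  rw [Fin.sum_univ_add]
  simp [Fin.append_left, Fin.append_right]

lemma le_antitone_iff {m : ℕ} {w : Fin m → ℝ} (hw : Antitone w) (i : Fin m) (t : ℝ) :
    t ≤ w i ↔ (i : ℕ) < Ncnt w t := by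
  constructor
  · intro h
    have hsub : Finset.Iic i ⊆ Finset.univ.filter (fun j => t ≤ w j) := by
      intro j hj
      simp only [Finset.mem_Iic] at hj
      simp only [Finset.mem_filter, Finset.mem_univ, true_and]
      exact le_trans h (hw hj)
    have := Finset.card_le_card hsub
    rw [Fin.card_Iic] at this
    unfold Ncnt
    omega
  · intro h
    by_contra hc
    push_neg at hc
    have hsub : Finset.univ.filter (fun j => t ≤ w j) ⊆ Finset.Iio i := by
      intro j hj
      simp only [Finset.mem_filter, Finset.mem_univ, true_and] at hj
      simp only [Finset.mem_Iio]
      by_contra hji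
      push_neg at hji
      exact absurd (le_trans hj (hw hji)) (not_le.mpr hc)
    have := Finset.card_le_card hsub
    rw [Fin.card_Iio] at this
    unfold Ncnt at h
    omega

lemma sortDesc_mem_Icc {m : ℕ} (v : Fin m → ℝ) (hv : ∀ j, v j ∈ Set.Icc (0:ℝ) 1) (i : Fin m) :
    sortDesc v i ∈ Set.Icc (0:ℝ) 1 := hv _

lemma append_mem_Icc {n d : ℕ} {k : Fin n → ℝ} {f : Fin d → ℝ}
    (hk : ∀ i, k i ∈ Set.Icc (0:ℝ) 1) (hf : ∀ i, f i ∈ Set.Icc (0:ℝ) 1) :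
    ∀ j, Fin.append k f j ∈ Set.Icc (0:ℝ) 1 := by
  intro j
  refine Fin.addCases (fun i => ?_) (fun i => ?_) j
  · rw [Fin.append_left]; exact hk i
  · rw [Fin.append_right]; exact hf i

/-- density gives at least d extra elements in a window of length 2dε -/
lemma dense_count {n d : ℕ} {ε : ℝ} (hε : 0 < ε) {k : Fin n → ℝ}
    (hdense : ∀ x ∈ Set.Icc (0 : ℝ) 1, ∃ i, |k i - x| < ε)
    {t : ℝ} (ht1 : t ≤ 1) (ht0 : 0 ≤ t - 2 * d * ε) :
    Ncnt k t + d ≤ Ncnt k (t - 2 * d * ε) := by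
  classical
  -- choose witnesses
  have hx : ∀ j : Fin d, ∃ i, |k i - (t - (2 * (j:ℝ) + 1) * ε)| < ε := by
    intro j
    apply hdense
    constructor
    · have hj : (j : ℝ) ≤ (d : ℝ) - 1 := by
        have := j.isLt
        have : ((j:ℕ):ℝ) + 1 ≤ (d:ℝ) := by exact_mod_cast this
        linarith
      nlinarith
    · nlinarith [j.2, hε.le, (by positivity : (0:ℝ) ≤ (j:ℝ))]
  choose w hw using hx
  have hwmem : ∀ j : Fin d, t - 2 * ((j:ℝ) + 1) * ε < k (w j) ∧ k (w j) < t - 2 * (j:ℝ) * ε := by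
    intro j
    have := abs_lt.mp (hw j)
    constructor <;> nlinarith [this.1, this.2]
  have hwinj : Function.Injective w := by
    intro a b hab
    by_contra hne
    rcases lt_or_gt_of_ne (fun h : a = b => hne h) with h | h
    · have h1 := (hwmem b).2
      have h2 := (hwmem a).1
      rw [hab] at h2
      have hv : (a:ℕ) + 1 ≤ (b:ℕ) := h
      have : (a:ℝ) + 1 ≤ (b:ℝ) := by exact_mod_cast hv
      nlinarith
    · have h1 := (hwmem a).2
      have h2 := (hwmem b).1
      rw [hab] at h1
      have hv : (b:ℕ) + 1 ≤ (a:ℕ) := h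
      have : (b:ℝ) + 1 ≤ (a:ℝ) := by exact_mod_cast hv
      nlinarith
  set S := Finset.univ.filter (fun j => t ≤ k j) with hS
  set B := Finset.univ.filter (fun j => t - 2 * d * ε ≤ k j) with hB
  have hSB : S ⊆ B := by
    intro j hj
    simp only [hS, hB, Finset.mem_filter, Finset.mem_univ, true_and] at *
    nlinarith [hε.le, (by positivity : (0:ℝ) ≤ (d:ℝ))]
  have himg : Finset.image w Finset.univ ⊆ B \ S := by
    intro x hx
    simp only [Finset.mem_image, Finset.mem_univ, true_and] at hx
    obtain ⟨j, rfl⟩ := hx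
    have h1 := (hwmem j).1
    have h2 := (hwmem j).2
    simp only [hB, hS, Finset.mem_sdiff, Finset.mem_filter, Finset.mem_univ, true_and]
    constructor
    · have hj : (j:ℝ) + 1 ≤ (d:ℝ) := by exact_mod_cast j.isLt
      nlinarith
    · intro hle
      nlinarith [(by positivity : (0:ℝ) ≤ (j:ℝ))]
  have hcard : d ≤ (B \ S).card := by
    calc d = (Finset.image w Finset.univ).card := by
            rw [Finset.card_image_of_injective _ hwinj, Finset.card_univ, Fintype.card_fin]
      _ ≤ (B \ S).card := Finset.card_le_card himg
  have hsd : (B \ S).card = B.card - S.card := Finset.card_sdiff_of_subset hSB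
  have hle := Finset.card_le_card hSB
  show S.card + d ≤ B.card
  omega

lemma key_ineq (n d : ℕ) (ε : ℝ) (hε : 0 < ε)
    (k : Fin n → ℝ) (f g : Fin d → ℝ)
    (hk01 : ∀ i, k i ∈ Set.Icc (0 : ℝ) 1)
    (hdense : ∀ x ∈ Set.Icc (0 : ℝ) 1, ∃ i, |k i - x| < ε)
    (hf : ∀ i, f i ∈ Set.Icc (0 : ℝ) 1) (hg : ∀ i, g i ∈ Set.Icc (0 : ℝ) 1)
    (i : Fin (n + d)) :
    sortDesc (Fin.append k f) i - sortDesc (Fin.append k g) i ≤ 2 * d * ε := by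
  by_contra hc
  push_neg at hc
  have hamem := sortDesc_mem_Icc _ (append_mem_Icc hk01 hf) i
  have hbmem := sortDesc_mem_Icc _ (append_mem_Icc hk01 hg) i
  have ht1 : sortDesc (Fin.append k f) i ≤ 1 := hamem.2
  have ht0 : 0 ≤ sortDesc (Fin.append k f) i - 2 * d * ε := by
    have := hbmem.1; linarith
  have h1 : (i:ℕ) < Ncnt (sortDesc (Fin.append k f)) (sortDesc (Fin.append k f) i) :=
    (le_antitone_iff (sortDesc_antitone _) i _).mp le_rfl
  rw [Ncnt_sortDesc, Ncnt_append] at h1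
  have h2 : ¬ (sortDesc (Fin.append k f) i - 2 * d * ε ≤ sortDesc (Fin.append k g) i) := by
    linarith
  rw [le_antitone_iff (sortDesc_antitone _) i, Ncnt_sortDesc, Ncnt_append] at h2
  push_neg at h2
  have h3 := dense_count hε hdense ht1 ht0
  have h4 := Ncnt_le f (sortDesc (Fin.append k f) i)
  omega

theorem sorted_append_dist_of_dense (n d : ℕ) (ε : ℝ) (hε : 0 < ε)
    (k : Fin n → ℝ) (f g : Fin d → ℝ)
    (hk : Antitone k) (hk01 : ∀ i, k i ∈ Set.Icc (0 : ℝ) 1)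
    (hdense : ∀ x ∈ Set.Icc (0 : ℝ) 1, ∃ i, |k i - x| < ε)
    (hf : ∀ i, f i ∈ Set.Icc (0 : ℝ) 1) (hg : ∀ i, g i ∈ Set.Icc (0 : ℝ) 1) :
    ‖sortDesc (Fin.append k f) - sortDesc (Fin.append k g)‖ ≤ 2 * d * ε := by
  have hr : (0:ℝ) ≤ 2 * d * ε := by positivity
  rw [pi_norm_le_iff_of_nonneg hr]
  intro i
  rw [Pi.sub_apply, Real.norm_eq_abs, abs_sub_le_iff]
  exact ⟨key_ineq n d ε hε k f g hk01 hdense hf hg i,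
         key_ineq n d ε hε k g f hk01 hdense hg hf i⟩
end
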